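/- arXiv:1512.04596 — 3 statements merged into one kernel-verified Lean document; each statement's English description precedes it below -/
import Mathlib

section
/- Let (Ω, F, P, θ) be a stationary ergodic quadruple carrying σ, τ as in the context and let p ≥ 1. Then there exists a measurable, almost surely finite Ō_p-valued random vector Y with Y∘θ = Ψ^p(Y) P-a.s.; moreover every such solution Y satisfies Y(p) = Z_1 a.s. and Y(i) ≤ Z_{p+1−i} a.s. for every i ∈ {1,…,p}, i.e. Y ≺ (Z_p, Z_{p−1}, …, Z_1) a.s. -/
open MeasureTheory ProbabilityTheory Filter

noncomputable section

/-- Positive part `[x]⁺ = max(x,0)`. -/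
def pos (x : ℝ) : ℝ := max x 0

/-- Nondecreasing rearrangement of a finite real vector. -/
def sortVec {n : ℕ} (u : Fin n → ℝ) : Fin n → ℝ := u ∘ Tuple.sort u

/-- `u` belongs to `Ō_n`: nonnegative and nondecreasing coordinates. -/
def OSorted {n : ℕ} (u : Fin n → ℝ) : Prop := (∀ i, 0 ≤ u i) ∧ Monotone u

/-- Two-sided iterates `θ^n`, `n ∈ ℤ`, of a measurable bijection. -/
def iterZ {Ω : Type*} [MeasurableSpace Ω] (θ : Ω ≃ᵐ Ω) : ℤ → Ω → Ω
  | Int.ofNat n => (⇑θ)^[n]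
  | Int.negSucc n => (⇑θ.symm)^[n + 1]

/-- The term `σ∘θ^{-k} − Σ_{i=1}^k τ∘θ^{-i}` (here `θinv = θ⁻¹`). -/
def Zterm {Ω : Type*} (θinv : Ω → Ω) (σ τ : Ω → ℝ) (k : ℕ) (ω : Ω) : ℝ :=
  σ (θinv^[k] ω) - ∑ i ∈ Finset.Icc 1 k, τ (θinv^[i] ω)

/-- `Z_ℓ = [sup_{k ≥ ℓ} (σ∘θ^{-k} − Σ_{i=1}^k τ∘θ^{-i})]⁺`. -/
def Zfam {Ω : Type*} (θinv : Ω → Ω) (σ τ : Ω → ℝ) (ℓ : ℕ) (ω : Ω) : ℝ :=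
  pos (⨆ k : {k : ℕ // ℓ ≤ k}, Zterm θinv σ τ (k : ℕ) ω)

/-- GI/GI input: the doubly infinite sequences `(σ∘θ^n)` and `(τ∘θ^n)` are
jointly independent, and each is identically distributed. -/
def GIGI {Ω : Type*} [MeasurableSpace Ω] (μ : Measure Ω) (θ : Ω ≃ᵐ Ω) (σ τ : Ω → ℝ) : Prop :=
  iIndepFun
    (fun x : ℤ × Bool => fun ω => if x.2 then σ (iterZ θ x.1 ω) else τ (iterZ θ x.1 ω)) μ
  ∧ (∀ n : ℤ, IdentDistrib (fun ω => σ (iterZ θ n ω)) σ μ μ)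
  ∧ (∀ n : ℤ, IdentDistrib (fun ω => τ (iterZ θ n ω)) τ μ μ)

/-- The distribution of `τ` has unbounded support. -/
def UnboundedSupport {Ω : Type*} [MeasurableSpace Ω] (μ : Measure Ω) (τ : Ω → ℝ) : Prop :=
  ∀ M : ℝ, 0 < M → 0 < μ {ω | M < τ ω}

/-- The Kiefer–Wolfowitz map `G(u) = sorted [u + σe₁ − τ𝟙]⁺`. -/
def Gmap (S : ℕ) (σ τ : ℝ) (u : Fin S → ℝ) : Fin S → ℝ :=
  sortVec fun i => pos (u i + (if (i : ℕ) = 0 then σ else 0) - τ)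

/-- The map `G^p` driving the J_{p+1}SW service profile. -/
def Gp (S p : ℕ) (hS : 0 < S) (σ τ : ℝ) (u : Fin S → ℝ) : Fin S → ℝ :=
  if u ⟨0, hS⟩ = 0 then Gmap S σ τ u
  else sortVec fun i => pos (u i + (if (i : ℕ) = p then σ else 0) - τ)

/-- The map `Γ^p`. -/
def Gamma (p : ℕ) (σ τ : ℝ) (u : Fin p → ℝ) : Fin p → ℝ := fun j =>
  if h : (j : ℕ) + 1 < p then pos (u ⟨(j : ℕ) + 1, h⟩ - τ) else pos (max (u j) σ - τ)

/-- The map `Ψ^p`. -/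
def Psi (p : ℕ) (σ τ : ℝ) (u : Fin p → ℝ) : Fin p → ℝ := fun j =>
  if h : (j : ℕ) + 1 < p then pos (min (max (u j) σ) (u ⟨(j : ℕ) + 1, h⟩) - τ)
  else pos (max (u j) σ - τ)

/-- The map `Φ^p` on `Ō_S` (with `1 ≤ p < S`). -/
def Phi (S p : ℕ) (hp : p < S) (σ τ : ℝ) (u : Fin S → ℝ) : Fin S → ℝ := fun j =>
  let ind : ℝ := if 0 < u ⟨0, Nat.lt_of_le_of_lt (Nat.zero_le p) hp⟩ then u ⟨p, hp⟩ else 0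
  if h : (j : ℕ) + 1 < S then
    if (j : ℕ) < p then pos (min (max (u j) σ) (u ⟨(j : ℕ) + 1, h⟩) - τ)
    else pos (min (max (u j) (σ + ind)) (u ⟨(j : ℕ) + 1, h⟩) - τ)
  else pos (max (u j) (σ + ind) - τ)

/-- The loss-system map `H^p(u) = sorted [u + σ·1_{u(1)=0}e₁ − τ𝟙]⁺`. -/
def Hmap (p : ℕ) (hp : 0 < p) (σ τ : ℝ) (u : Fin p → ℝ) : Fin p → ℝ :=
  sortVec fun i => pos (u i + (if (i : ℕ) = 0 ∧ u ⟨0, hp⟩ = 0 then σ else 0) - τ)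

end

/-! Write `f = θ⁻¹`. The last coordinate of `Ψ^p` is Lindley's map `x ↦ [max(x, σ) − τ]⁺`, and
`Z₁` is a supersolution of it: `Z₁ ≥ [max(Z₁ ∘ f, σ ∘ f) − τ ∘ f]⁺`, finite almost surely by
Loynes' lemma (ergodicity and `E τ > 0`). Since `Ψ^p` is monotone, the profiles obtained by
starting empty at time `-n` and applying `Ψ^p` up to time `0` increase with `n` and stay below
`Z₁`; their limit is a stationary solution.

Conversely, unrolling the recursion of a solution `Y` gives `Y(p) ≥ Z₁`. Where `Y(p) > Z₁`, the
gap persists backwards along the orbit and `Y(p)` is never truncated there, so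
`Y(p) ∘ f^n = Y(p) + ∑_{i ≤ n} τ ∘ f^i → ∞`, which Poincaré recurrence forbids. The bounds
`Y(i) ≤ Z_{p+1-i}` follow by descending induction from `Ψ^p(u)(j) ≤ [u(j+1) − τ]⁺`. Finally,
`σ` and `τ` may be replaced by measurable versions, which changes nothing almost surely. -/

section Development

open Set Function Topology

section PositivePart

lemma pos_nonneg (a : ℝ) : 0 ≤ pos a := le_max_right _ _

lemma le_pos (a : ℝ) : a ≤ pos a := le_max_left _ _

lemma pos_mono : Monotone pos := fun _ _ h => max_le_max h le_rfl

lemma pos_le {a c : ℝ} (ha : a ≤ c) (hc : 0 ≤ c) : pos a ≤ c := max_le ha hc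

lemma pos_eq_self_of_pos {a : ℝ} (h : 0 < pos a) : pos a = a := by
  unfold pos at *
  exact max_eq_left (not_lt.1 fun ha => h.ne' (max_eq_right ha.le))

lemma continuous_pos : Continuous pos := by unfold pos; fun_prop

end PositivePart

section PsiMap

variable {p : ℕ} {a b : ℝ}

lemma Psi_nonneg (u : Fin p → ℝ) (j : Fin p) : 0 ≤ Psi p a b u j := by
  unfold Psi; split <;> exact pos_nonneg _

lemma Psi_monotone : Monotone (Psi p a b) := by
  intro u v h j
  unfold Psi; split
  · exact pos_mono (by gcongr <;> apply h)
  · exact pos_mono (by gcongr; apply h)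

lemma Psi_of_succ_eq (u : Fin p → ℝ) {j : Fin p} (hj : (j : ℕ) + 1 = p) :
    Psi p a b u j = pos (max (u j) a - b) := by
  unfold Psi; rw [dif_neg (by omega)]

lemma Psi_le_pos_sub_succ (u : Fin p → ℝ) (j : Fin p) (h : (j : ℕ) + 1 < p) :
    Psi p a b u j ≤ pos (u ⟨j + 1, h⟩ - b) := by
  unfold Psi; rw [dif_pos h]
  exact pos_mono (sub_le_sub_right (min_le_right _ _) _)

lemma Psi_sorted {u : Fin p → ℝ} (hu : OSorted u) : OSorted (Psi p a b u) := by
  refine ⟨Psi_nonneg u, fun i j hij => ?_⟩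
  unfold Psi
  by_cases hj : (j : ℕ) + 1 < p
  · rw [dif_pos (by omega), dif_pos hj]
    refine pos_mono (sub_le_sub_right (min_le_min (max_le_max (hu.2 hij) le_rfl) (hu.2 ?_)) _)
    simp only [Fin.le_def] at hij ⊢; omega
  · rcases eq_or_lt_of_le hij with rfl | hlt
    · rfl
    · rw [dif_pos (by omega), dif_neg hj]
      refine pos_mono (sub_le_sub_right ((min_le_right _ _).trans ?_) _)
      exact (hu.2 (by simp [Fin.le_def]; omega)).trans (le_max_left _ _)

lemma continuous_Psi : Continuous fun x : ℝ × ℝ × (Fin p → ℝ) => Psi p x.1 x.2.1 x.2.2 := by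
  refine continuous_pi fun j => ?_
  unfold Psi
  split <;> exact continuous_pos.comp (by fun_prop)

end PsiMap

section Supremum

variable {Ω : Type*} {f : Ω → Ω} {σ τ : Ω → ℝ} {ω : Ω}

lemma Zterm_zero : Zterm f σ τ 0 ω = σ ω := by simp [Zterm]

lemma sum_Icc_one_succ (g : ℕ → ℝ) (k : ℕ) :
    ∑ i ∈ Finset.Icc 1 (k + 1), g i = ∑ i ∈ Finset.Icc 1 k, g (i + 1) + g 1 := by
  simp only [← Finset.Ico_add_one_right_eq_Icc, Finset.sum_Ico_eq_sum_range, add_tsub_cancel_right,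
    Finset.sum_range_succ' _ k, add_comm 1]

lemma Zterm_succ (k : ℕ) : Zterm f σ τ (k + 1) ω = Zterm f σ τ k (f ω) - τ (f ω) := by
  simp only [Zterm, sum_Icc_one_succ, iterate_succ_apply, iterate_zero_apply]
  ring

lemma bddAbove_Zterm_comp_iff :
    BddAbove (range fun k => Zterm f σ τ k (f ω)) ↔ BddAbove (range fun k => Zterm f σ τ k ω) := by
  simp only [bddAbove_def, forall_mem_range]
  constructor
  · rintro ⟨C, hC⟩
    refine ⟨max (σ ω) (C - τ (f ω)), fun k => ?_⟩
    cases k with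
    | zero => exact Zterm_zero.trans_le (le_max_left _ _)
    | succ k => exact (Zterm_succ k).trans_le (le_max_of_le_right (by linarith [hC k]))
  · rintro ⟨C, hC⟩
    refine ⟨C + τ (f ω), fun k => ?_⟩
    have := hC (k + 1)
    rw [Zterm_succ] at this
    linarith

instance (ℓ : ℕ) : Nonempty {k : ℕ // ℓ ≤ k} := ⟨⟨ℓ, le_rfl⟩⟩

lemma le_Zfam (hB : BddAbove (range fun k => Zterm f σ τ k ω)) {ℓ k : ℕ} (hk : ℓ ≤ k) :
    Zterm f σ τ k ω ≤ Zfam f σ τ ℓ ω :=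
  (le_ciSup (hB.mono (range_comp_subset_range Subtype.val _)) ⟨k, hk⟩).trans (le_pos _)

lemma Zfam_le {ℓ : ℕ} {c : ℝ} (h : ∀ k, ℓ ≤ k → Zterm f σ τ k ω ≤ c) (hc : 0 ≤ c) :
    Zfam f σ τ ℓ ω ≤ c :=
  pos_le (ciSup_le fun k => h k k.2) hc

lemma Zfam_nonneg (ℓ : ℕ) : 0 ≤ Zfam f σ τ ℓ ω := pos_nonneg _

lemma Zfam_comp_le (hB : BddAbove (range fun k => Zterm f σ τ k ω)) (ht : 0 ≤ τ (f ω))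
    {ℓ ℓ' : ℕ} (h : ℓ' ≤ ℓ + 1) : Zfam f σ τ ℓ (f ω) ≤ Zfam f σ τ ℓ' ω + τ (f ω) := by
  refine Zfam_le (fun k hk => ?_) (add_nonneg (Zfam_nonneg ℓ') ht)
  have := le_Zfam hB (show ℓ' ≤ k + 1 by omega)
  rw [Zterm_succ] at this
  linarith

lemma pos_max_sub_le_Zfam_one (hB : BddAbove (range fun k => Zterm f σ τ k ω))
    (ht : 0 ≤ τ (f ω)) : pos (max (Zfam f σ τ 1 (f ω)) (σ (f ω)) - τ (f ω)) ≤ Zfam f σ τ 1 ω := by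
  refine pos_le (sub_le_iff_le_add.2 (max_le (Zfam_comp_le hB ht le_add_self) ?_)) (Zfam_nonneg 1)
  have := le_Zfam hB (le_refl 1)
  rw [Zterm_succ, Zterm_zero] at this
  linarith

/-- `maxZterm f σ τ n ω = max_{k ≤ n} Zterm f σ τ k ω`, written as Lindley's recursion. -/
def maxZterm (f : Ω → Ω) (σ τ : Ω → ℝ) : ℕ → Ω → ℝ
  | 0 => σ
  | n + 1 => fun ω => max (σ ω) (maxZterm f σ τ n (f ω) - τ (f ω))

lemma le_maxZterm (n : ℕ) (ω : Ω) : σ ω ≤ maxZterm f σ τ n ω := by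
  cases n with
  | zero => exact le_rfl
  | succ n => exact le_max_left _ _

lemma maxZterm_le_succ (n : ℕ) (ω : Ω) : maxZterm f σ τ n ω ≤ maxZterm f σ τ (n + 1) ω := by
  induction n generalizing ω with
  | zero => exact le_max_left _ _
  | succ n ih => exact max_le_max le_rfl (sub_le_sub_right (ih (f ω)) _)

lemma Zterm_le_maxZterm {k n : ℕ} (hk : k ≤ n) (ω : Ω) :
    Zterm f σ τ k ω ≤ maxZterm f σ τ n ω := by
  induction n generalizing k ω with
  | zero =>
    obtain rfl : k = 0 := by omega
    exact Zterm_zero.le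
  | succ n ih =>
    cases k with
    | zero => exact Zterm_zero.trans_le (le_maxZterm _ _)
    | succ k =>
      exact (Zterm_succ k).trans_le
        (le_max_of_le_right (sub_le_sub_right (ih (by omega) (f ω)) _))

lemma tendsto_maxZterm {ω : Ω} (h : ¬BddAbove (range fun k => Zterm f σ τ k ω)) :
    Tendsto (fun n => maxZterm f σ τ n ω) atTop atTop := by
  refine tendsto_atTop_atTop_of_monotone (monotone_nat_of_le_succ fun n => maxZterm_le_succ n ω)
    fun C => ?_
  simp only [bddAbove_def, forall_mem_range, not_exists, not_forall, not_le] at h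
  obtain ⟨k, hk⟩ := h C
  exact ⟨k, hk.le.trans (Zterm_le_maxZterm le_rfl ω)⟩

lemma maxZterm_succ_sub (n : ℕ) (ω : Ω) :
    maxZterm f σ τ (n + 1) ω - maxZterm f σ τ n (f ω)
      = max (σ ω - maxZterm f σ τ n (f ω)) (-τ (f ω)) := by
  rw [maxZterm, ← max_sub_sub_right, sub_sub_cancel_left]

end Supremum

section Ergodic

variable {Ω : Type*} [MeasurableSpace Ω] {μ : Measure Ω} {f : Ω → Ω} {σ τ : Ω → ℝ}

lemma MeasureTheory.MeasurePreserving.ae_forall_iterate (hf : MeasurePreserving f μ μ)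
    {P : Ω → Prop} (h : ∀ᵐ ω ∂μ, P ω) : ∀ᵐ ω ∂μ, ∀ n, P (f^[n] ω) :=
  ae_all_iff.2 fun n => (hf.iterate n).quasiMeasurePreserving.ae h

lemma MeasureTheory.MeasurePreserving.integral_comp_eq (hf : MeasurePreserving f μ μ) {g : Ω → ℝ}
    (hg : Measurable g) : ∫ ω, g (f ω) ∂μ = ∫ ω, g ω ∂μ := by
  conv_rhs => rw [← hf.map_eq]
  exact (integral_map hf.measurable.aemeasurable hg.aestronglyMeasurable).symm

lemma MeasureTheory.Conservative.ae_not_tendsto_atTop (hf : Conservative f μ) {g : Ω → ℝ}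
    (hg : Measurable g) :
    ∀ᵐ ω ∂μ, ¬Tendsto (fun n => g (f^[n] ω)) atTop atTop := by
  have hrec : ∀ K : ℕ, ∀ᵐ ω ∂μ, g ω ≤ K → ∃ᶠ n in atTop, g (f^[n] ω) ≤ K := fun K =>
    hf.ae_mem_imp_frequently_image_mem (measurableSet_le hg measurable_const).nullMeasurableSet
  filter_upwards [ae_all_iff.2 hrec] with ω hω htends
  obtain ⟨K, hK⟩ := exists_nat_ge (g ω)
  obtain ⟨n, hle, hgt⟩ := ((hω K hK).and_eventually (htends.eventually_gt_atTop K)).exists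
  exact hle.not_gt hgt

lemma measurable_Zterm (hf : Measurable f) (hσ : Measurable σ) (hτ : Measurable τ) (k : ℕ) :
    Measurable (Zterm f σ τ k) :=
  (hσ.comp (hf.iterate k)).sub (Finset.measurable_sum _ fun i _ => hτ.comp (hf.iterate i))

lemma measurable_maxZterm (hf : Measurable f) (hσ : Measurable σ) (hτ : Measurable τ) (n : ℕ) :
    Measurable (maxZterm f σ τ n) := by
  induction n with
  | zero => exact hσ
  | succ n ih => exact hσ.max ((ih.comp hf).sub (hτ.comp hf))

lemma integrable_maxZterm (hf : MeasurePreserving f μ μ) (hσ : Integrable σ μ)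
    (hτ : Integrable τ μ) (n : ℕ) : Integrable (maxZterm f σ τ n) μ := by
  induction n with
  | zero => exact hσ
  | succ n ih =>
    exact hσ.sup ((hf.integrable_comp_of_integrable ih).sub (hf.integrable_comp_of_integrable hτ))

/-- Loynes' lemma. Otherwise, by ergodicity, the increments `maxZterm (n+1) - maxZterm n ∘ f`,
whose integrals are nonnegative, would decrease almost everywhere to `-τ ∘ f`. -/
theorem ae_bddAbove_Zterm (hf : Ergodic f μ) (hσm : Measurable σ) (hτm : Measurable τ)
    (hσ : Integrable σ μ) (hτ : Integrable τ μ) (hτpos : 0 < ∫ ω, τ ω ∂μ) :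
    ∀ᵐ ω ∂μ, BddAbove (range fun k => Zterm f σ τ k ω) := by
  have hfm := hf.toMeasurePreserving
  have hB : MeasurableSet {ω | BddAbove (range fun k => Zterm f σ τ k ω)} :=
    measurableSet_bddAbove_range (measurable_Zterm hfm.measurable hσm hτm)
  refine (hf.toPreErgodic.ae_mem_or_ae_notMem hB
    (ext fun ω => bddAbove_Zterm_comp_iff)).resolve_right fun hunb => ?_
  have hM := integrable_maxZterm hfm hσ hτ
  have hMf : ∀ n, Integrable (fun ω => maxZterm f σ τ n (f ω)) μ := fun n =>
    hfm.integrable_comp_of_integrable (hM n)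
  have hmean : ∀ n, 0 ≤ ∫ ω, maxZterm f σ τ (n + 1) ω - maxZterm f σ τ n (f ω) ∂μ := fun n => by
    rw [integral_sub (hM (n + 1)) (hMf n),
      hfm.integral_comp_eq (measurable_maxZterm hfm.measurable hσm hτm n), sub_nonneg]
    exact integral_mono (hM n) (hM (n + 1)) (maxZterm_le_succ n)
  have hlim : Tendsto (fun n => ∫ ω, maxZterm f σ τ (n + 1) ω - maxZterm f σ τ n (f ω) ∂μ)
      atTop (𝓝 (∫ ω, -τ (f ω) ∂μ)) := by
    refine integral_tendsto_of_tendsto_of_antitone (fun n => (hM (n + 1)).sub (hMf n))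
      (hfm.integrable_comp_of_integrable hτ).neg (ae_of_all _ fun ω m n hmn => ?_) ?_
    · simp only [maxZterm_succ_sub]
      exact max_le_max (sub_le_sub_left (monotone_nat_of_le_succ
        (fun n => maxZterm_le_succ n (f ω)) hmn) _) le_rfl
    · filter_upwards [hfm.quasiMeasurePreserving.ae hunb] with ω hω
      have hmax := tendsto_maxZterm (f := f) (σ := σ) (τ := τ) hω
      refine tendsto_const_nhds.congr' ?_
      filter_upwards [hmax.eventually_ge_atTop (σ ω + τ (f ω))] with n hn
      rw [maxZterm_succ_sub, max_eq_right (by linarith)]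
  rw [integral_neg, hfm.integral_comp_eq hτm] at hlim
  linarith [ge_of_tendsto' hlim hmean]

theorem ae_tendsto_sum_Icc [IsProbabilityMeasure μ] (hf : Ergodic f μ) (hτm : Measurable τ)
    (hτ : Integrable τ μ) (hτpos : 0 < ∫ ω, τ ω ∂μ) :
    ∀ᵐ ω ∂μ, Tendsto (fun n => ∑ i ∈ Finset.Icc 1 n, τ (f^[i] ω)) atTop atTop := by
  -- Loynes' lemma for `σ = 0` and `τ - c`, which still has positive mean.
  set c := (∫ ω, τ ω ∂μ) / 2 with hc
  have hbdd := ae_bddAbove_Zterm (σ := fun _ => 0) (τ := fun ω => τ ω - c) hf measurable_const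
    (hτm.sub measurable_const) (integrable_zero _ _ _) (hτ.sub (integrable_const c))
    (by
      rw [integral_sub hτ (integrable_const c)]
      simp only [integral_const, probReal_univ, smul_eq_mul, one_mul, sub_pos]
      linarith)
  filter_upwards [hbdd] with ω ⟨C, hC⟩
  rw [mem_upperBounds, forall_mem_range] at hC
  refine tendsto_atTop_mono (fun n => ?_) (tendsto_atTop_add_const_right _ (-C)
    ((tendsto_natCast_atTop_atTop (R := ℝ)).atTop_mul_const (by positivity : 0 < c)))
  have := hC n
  simp only [Zterm, Finset.sum_sub_distrib, Finset.sum_const, Nat.card_Icc, add_tsub_cancel_right,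
    nsmul_eq_mul, zero_sub, neg_sub, tsub_le_iff_right] at this
  linarith

end Ergodic

section Orbit

variable {Ω : Type*} {f : Ω → Ω} {σ τ : Ω → ℝ} {S : Set Ω} {p : ℕ}

lemma mapsTo_setOf_forall_iterate (P : Ω → Prop) :
    MapsTo f {ω | ∀ n, P (f^[n] ω)} {ω | ∀ n, P (f^[n] ω)} :=
  fun ω h n => by simpa only [iterate_succ_apply] using h (n + 1)

lemma Zterm_succ_le_of_lindley (hS : MapsTo f S S) {D : Ω → ℝ}
    (hD : ∀ ω ∈ S, D ω = pos (max (D (f ω)) (σ (f ω)) - τ (f ω))) (k : ℕ) :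
    ∀ ω ∈ S, Zterm f σ τ (k + 1) ω ≤ D ω := by
  induction k with
  | zero =>
    intro ω hω
    rw [hD ω hω, Zterm_succ, Zterm_zero]
    exact (sub_le_sub_right (le_max_right _ _) _).trans (le_pos _)
  | succ k ih =>
    intro ω hω
    rw [hD ω hω, Zterm_succ]
    exact (sub_le_sub_right ((ih _ (hS hω)).trans (le_max_left _ _)) _).trans (le_pos _)

lemma Zfam_one_le_of_lindley (hS : MapsTo f S S) {D : Ω → ℝ}
    (hD : ∀ ω ∈ S, D ω = pos (max (D (f ω)) (σ (f ω)) - τ (f ω))) :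
    ∀ ω ∈ S, Zfam f σ τ 1 ω ≤ D ω := fun ω hω =>
  Zfam_le (fun k hk => by
      obtain ⟨k, rfl⟩ := Nat.exists_eq_add_of_le' hk
      exact Zterm_succ_le_of_lindley hS hD k ω hω)
    (by rw [hD ω hω]; exact pos_nonneg _)

/-- `d` solves Lindley's recursion and `z` is a supersolution: a gap `z < d` persists one step
back, where `d` is not truncated. -/
lemma lindley_gap {d d' z z' s t : ℝ} (hd : d = pos (max d' s - t))
    (hz : pos (max z' s - t) ≤ z) (h : z < d) : z' < d' ∧ d = d' - t := by
  have hd_pos : 0 < pos (max d' s - t) := hd ▸ (pos_nonneg _).trans_lt (hz.trans_lt h)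
  rw [pos_eq_self_of_pos hd_pos] at hd
  have hmax : max z' s < max d' s := by linarith [le_pos (max z' s - t)]
  have hz' : z' < d' := lt_of_not_ge fun hle => hmax.not_ge (max_le_max hle le_rfl)
  have hs : s ≤ d' := le_of_not_gt fun hlt => hmax.not_ge
    ((max_eq_right hlt.le).trans_le (le_max_right _ _))
  exact ⟨hz', by rw [hd, max_eq_left hs]⟩

lemma le_Zfam_one_of_lindley (hS : MapsTo f S S) {D : Ω → ℝ}
    (hD : ∀ ω ∈ S, D ω = pos (max (D (f ω)) (σ (f ω)) - τ (f ω)))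
    (hτ : ∀ ω ∈ S, 0 ≤ τ (f ω)) (hB : ∀ ω ∈ S, BddAbove (range fun k => Zterm f σ τ k ω))
    (hT : ∀ ω ∈ S, Tendsto (fun n => ∑ i ∈ Finset.Icc 1 n, τ (f^[i] ω)) atTop atTop)
    (hrec : ∀ ω ∈ S, ¬Tendsto (fun n => D (f^[n] ω)) atTop atTop) :
    ∀ ω ∈ S, D ω ≤ Zfam f σ τ 1 ω := by
  intro ω hω
  by_contra! hlt
  have hgap : ∀ n, Zfam f σ τ 1 (f^[n] ω) < D (f^[n] ω) ∧
      D (f^[n] ω) = D ω + ∑ i ∈ Finset.Icc 1 n, τ (f^[i] ω) := by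
    intro n
    induction n with
    | zero => simpa using hlt
    | succ n ih =>
      have hn : f^[n] ω ∈ S := hS.iterate n hω
      obtain ⟨hlt', heq⟩ :=
        lindley_gap (hD _ hn) (pos_max_sub_le_Zfam_one (hB _ hn) (hτ _ hn)) ih.1
      rw [← iterate_succ_apply' f n ω] at hlt' heq
      refine ⟨hlt', ?_⟩
      rw [Finset.sum_Icc_succ_top (by omega)]
      linarith [ih.2]
  exact hrec ω hω
    ((tendsto_atTop_add_const_left _ (D ω) (hT ω hω)).congr fun n => (hgap n).2.symm)

lemma le_Zfam_of_Psi (hS : MapsTo f S S) {Y : Ω → Fin p → ℝ}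
    (hY : ∀ ω ∈ S, Y ω = Psi p (σ (f ω)) (τ (f ω)) (Y (f ω)))
    (hτ : ∀ ω ∈ S, 0 ≤ τ (f ω)) (hB : ∀ ω ∈ S, BddAbove (range fun k => Zterm f σ τ k ω))
    (hlast : ∀ ω ∈ S, ∀ i : Fin p, (i : ℕ) + 1 = p → Y ω i ≤ Zfam f σ τ 1 ω) :
    ∀ ω ∈ S, ∀ i : Fin p, Y ω i ≤ Zfam f σ τ (p - i) ω := by
  suffices h : ∀ m, ∀ ω ∈ S, ∀ i : Fin p, p - i = m + 1 → Y ω i ≤ Zfam f σ τ (m + 1) ω from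
    fun ω hω i => (h (p - i - 1) ω hω i (by omega)).trans_eq (by congr 1; omega)
  intro m
  induction m with
  | zero => exact fun ω hω i hi => hlast ω hω i (by omega)
  | succ m ih =>
    intro ω hω i hi
    have hi1 : (i : ℕ) + 1 < p := by omega
    have hnext := ih (f ω) (hS hω) ⟨i + 1, hi1⟩ (by simp only; omega)
    calc Y ω i = Psi p (σ (f ω)) (τ (f ω)) (Y (f ω)) i := by rw [← hY ω hω]
      _ ≤ pos (Y (f ω) ⟨i + 1, hi1⟩ - τ (f ω)) := Psi_le_pos_sub_succ _ _ hi1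
      _ ≤ Zfam f σ τ (m + 1 + 1) ω :=
        pos_le (by linarith [Zfam_comp_le (hB ω hω) (hτ ω hω) (le_refl (m + 1 + 1))])
          (Zfam_nonneg _)

/-- Loynes' scheme: start from the empty profile `0` at time `-n` and apply `Ψ^p` up to time `0`. -/
def loynes (f : Ω → Ω) (p : ℕ) (σ τ : Ω → ℝ) : ℕ → Ω → Fin p → ℝ
  | 0 => fun _ => 0
  | n + 1 => fun ω => Psi p (σ (f ω)) (τ (f ω)) (loynes f p σ τ n (f ω))

noncomputable def loynesLimit (f : Ω → Ω) (p : ℕ) (σ τ : Ω → ℝ) (ω : Ω) : Fin p → ℝ :=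
  fun j => ⨆ n, loynes f p σ τ n ω j

lemma loynes_sorted (n : ℕ) (ω : Ω) : OSorted (loynes f p σ τ n ω) := by
  induction n generalizing ω with
  | zero => exact ⟨fun _ => le_rfl, monotone_const⟩
  | succ n ih => exact Psi_sorted (ih (f ω))

lemma monotone_loynes (ω : Ω) : Monotone fun n => loynes f p σ τ n ω := by
  refine monotone_nat_of_le_succ fun n => ?_
  induction n generalizing ω with
  | zero => exact fun j => Psi_nonneg _ j
  | succ n ih => exact Psi_monotone (ih (f ω))

lemma loynes_le_Zfam_one (hS : MapsTo f S S) (hτ : ∀ ω ∈ S, 0 ≤ τ (f ω))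
    (hB : ∀ ω ∈ S, BddAbove (range fun k => Zterm f σ τ k ω)) (n : ℕ) :
    ∀ ω ∈ S, ∀ j, loynes f p σ τ n ω j ≤ Zfam f σ τ 1 ω := by
  suffices hlast : ∀ ω ∈ S, ∀ j : Fin p, (j : ℕ) + 1 = p →
      loynes f p σ τ n ω j ≤ Zfam f σ τ 1 ω from
    fun ω hω j => have := j.isLt; ((loynes_sorted n ω).2 (show j ≤ ⟨p - 1, by omega⟩ from
      Fin.le_def.2 (by simp only; omega))).trans (hlast ω hω _ (by simp only; omega))
  induction n with
  | zero => exact fun ω _ _ _ => Zfam_nonneg 1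
  | succ n ih =>
    intro ω hω j hj
    simp only [loynes]
    rw [Psi_of_succ_eq _ hj]
    exact (pos_mono (sub_le_sub_right (max_le_max (ih _ (hS hω) j hj) le_rfl) _)).trans
      (pos_max_sub_le_Zfam_one (hB ω hω) (hτ ω hω))

section Limit

variable (hS : MapsTo f S S) (hτ : ∀ ω ∈ S, 0 ≤ τ (f ω))
    (hB : ∀ ω ∈ S, BddAbove (range fun k => Zterm f σ τ k ω))
include hS hτ hB

lemma tendsto_loynes {ω : Ω} (hω : ω ∈ S) :
    Tendsto (fun n => loynes f p σ τ n ω) atTop (𝓝 (loynesLimit f p σ τ ω)) :=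
  tendsto_pi_nhds.2 fun j => tendsto_atTop_ciSup (fun _ _ h => monotone_loynes ω h j)
    ⟨Zfam f σ τ 1 ω, forall_mem_range.2 fun n => loynes_le_Zfam_one hS hτ hB n ω hω j⟩

lemma loynesLimit_sorted {ω : Ω} (hω : ω ∈ S) : OSorted (loynesLimit f p σ τ ω) := by
  have h := tendsto_pi_nhds.1 (tendsto_loynes (p := p) hS hτ hB hω)
  exact ⟨fun j => ge_of_tendsto' (h j) fun n => (loynes_sorted n ω).1 j,
    fun i j hij => le_of_tendsto_of_tendsto' (h i) (h j) fun n => (loynes_sorted n ω).2 hij⟩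

lemma loynesLimit_eq_Psi {ω ω' : Ω} (hω : ω ∈ S) (hω' : ω' ∈ S) (hf : f ω' = ω) :
    loynesLimit f p σ τ ω' = Psi p (σ ω) (τ ω) (loynesLimit f p σ τ ω) := by
  refine tendsto_nhds_unique ((tendsto_loynes hS hτ hB hω').comp (tendsto_add_atTop_nat 1)) ?_
  have hcont := (continuous_Psi (p := p)).tendsto (σ ω, τ ω, loynesLimit f p σ τ ω)
  refine (hcont.comp (tendsto_const_nhds.prodMk_nhds
    (tendsto_const_nhds.prodMk_nhds (tendsto_loynes hS hτ hB hω)))).congr fun n => ?_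
  simp [loynes, hf]

end Limit

end Orbit

section Stationary

variable {Ω : Type*} [MeasurableSpace Ω] {μ : Measure Ω} {σ τ : Ω → ℝ} {p : ℕ}

lemma measurable_loynes {f : Ω → Ω} (hf : Measurable f) (hσ : Measurable σ) (hτ : Measurable τ)
    (n : ℕ) : Measurable (loynes f p σ τ n) := by
  induction n with
  | zero => exact measurable_const
  | succ n ih =>
    exact continuous_Psi.measurable.comp ((hσ.comp hf).prodMk ((hτ.comp hf).prodMk (ih.comp hf)))

lemma measurable_loynesLimit {f : Ω → Ω} (hf : Measurable f) (hσ : Measurable σ)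
    (hτ : Measurable τ) : Measurable (loynesLimit f p σ τ) :=
  measurable_pi_lambda _ fun j =>
    Measurable.iSup fun n => (measurable_pi_apply j).comp (measurable_loynes hf hσ hτ n)

lemma integral_pos_of_ae_pos [NeZero μ] (hτ : Integrable τ μ) (h : ∀ᵐ ω ∂μ, 0 < τ ω) :
    0 < ∫ ω, τ ω ∂μ := by
  rw [integral_pos_iff_support_of_nonneg_ae (h.mono fun _ h => h.le) hτ]
  exact pos_iff_ne_zero.2 (frequently_ae_mem_iff.1 (h.mono fun _ h => h.ne').frequently)

lemma Zfam_ae_congr {f : Ω → Ω} (hf : MeasurePreserving f μ μ) {σ' τ' : Ω → ℝ}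
    (hσ : σ =ᵐ[μ] σ') (hτ : τ =ᵐ[μ] τ') : ∀ᵐ ω ∂μ, ∀ ℓ, Zfam f σ τ ℓ ω = Zfam f σ' τ' ℓ ω := by
  filter_upwards [hf.ae_forall_iterate (hσ.and hτ)] with ω h ℓ
  have hσi : ∀ i, σ (f^[i] ω) = σ' (f^[i] ω) := fun i => (h i).1
  have hτi : ∀ i, τ (f^[i] ω) = τ' (f^[i] ω) := fun i => (h i).2
  simp only [Zfam, Zterm, hσi, hτi]

variable [IsProbabilityMeasure μ] {θ : Ω ≃ᵐ Ω}

theorem exists_stationary_Psi (hθ : Ergodic θ μ) (hσm : Measurable σ) (hτm : Measurable τ)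
    (hσ : Integrable σ μ) (hτ : Integrable τ μ) (hτ0 : ∀ᵐ ω ∂μ, 0 < τ ω) :
    ∃ Y : Ω → Fin p → ℝ, Measurable Y ∧ (∀ᵐ ω ∂μ, OSorted (Y ω)) ∧
      ∀ᵐ ω ∂μ, Y (θ ω) = Psi p (σ ω) (τ ω) (Y ω) := by
  set f := ⇑θ.symm
  have hf : MeasurePreserving f μ μ := hθ.symm.toMeasurePreserving
  set P : Ω → Prop := fun ω => 0 ≤ τ (f ω) ∧ BddAbove (range fun k => Zterm f σ τ k ω)
  have hgood : ∀ᵐ ω ∂μ, ∀ n, P (f^[n] ω) :=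
    hf.ae_forall_iterate ((hf.quasiMeasurePreserving.ae (hτ0.mono fun _ h => h.le)).and
      (ae_bddAbove_Zterm hθ.symm hσm hτm hσ hτ (integral_pos_of_ae_pos hτ hτ0)))
  have hS := mapsTo_setOf_forall_iterate (f := f) P
  have hP : ∀ ω ∈ {ω | ∀ n, P (f^[n] ω)}, P ω := fun _ h => h 0
  refine ⟨loynesLimit f p σ τ, measurable_loynesLimit θ.symm.measurable hσm hτm, ?_, ?_⟩
  · filter_upwards [hgood] with ω hω
    exact loynesLimit_sorted hS (fun ω h => (hP ω h).1) (fun ω h => (hP ω h).2) hω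
  · filter_upwards [hgood, hθ.quasiMeasurePreserving.ae hgood] with ω hω hθω
    exact loynesLimit_eq_Psi hS (fun ω h => (hP ω h).1) (fun ω h => (hP ω h).2) hω hθω
      (θ.symm_apply_apply ω)

theorem stationary_Psi_last_eq_and_le_Zfam (hθ : Ergodic θ μ) (hσm : Measurable σ)
    (hτm : Measurable τ) (hσ : Integrable σ μ) (hτ : Integrable τ μ) (hτ0 : ∀ᵐ ω ∂μ, 0 < τ ω)
    (hp : 0 < p) {Y : Ω → Fin p → ℝ} (hYm : Measurable Y)
    (hY : ∀ᵐ ω ∂μ, Y (θ ω) = Psi p (σ ω) (τ ω) (Y ω)) :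
    (∀ᵐ ω ∂μ, Y ω ⟨p - 1, by omega⟩ = Zfam (⇑θ.symm) σ τ 1 ω) ∧
      (∀ᵐ ω ∂μ, ∀ i : Fin p, Y ω i ≤ Zfam (⇑θ.symm) σ τ (p - i) ω) := by
  set f := ⇑θ.symm
  have hf : MeasurePreserving f μ μ := hθ.symm.toMeasurePreserving
  have hτpos := integral_pos_of_ae_pos hτ hτ0
  set D : Ω → ℝ := fun ω => Y ω ⟨p - 1, by omega⟩
  have hYf : ∀ᵐ ω ∂μ, Y ω = Psi p (σ (f ω)) (τ (f ω)) (Y (f ω)) := by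
    filter_upwards [hf.quasiMeasurePreserving.ae hY] with ω h
    rwa [θ.apply_symm_apply] at h
  set P : Ω → Prop := fun ω => Y ω = Psi p (σ (f ω)) (τ (f ω)) (Y (f ω)) ∧ 0 ≤ τ (f ω) ∧
    BddAbove (range fun k => Zterm f σ τ k ω) ∧
    Tendsto (fun n => ∑ i ∈ Finset.Icc 1 n, τ (f^[i] ω)) atTop atTop ∧
    ¬Tendsto (fun n => D (f^[n] ω)) atTop atTop
  have hgood : ∀ᵐ ω ∂μ, ∀ n, P (f^[n] ω) :=
    hf.ae_forall_iterate (hYf.and ((hf.quasiMeasurePreserving.ae (hτ0.mono fun _ h => h.le)).and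
      ((ae_bddAbove_Zterm hθ.symm hσm hτm hσ hτ hτpos).and
      ((ae_tendsto_sum_Icc hθ.symm hτm hτ hτpos).and
      (hf.conservative.ae_not_tendsto_atTop ((measurable_pi_apply _).comp hYm))))))
  have hS := mapsTo_setOf_forall_iterate (f := f) P
  have hP : ∀ ω ∈ {ω | ∀ n, P (f^[n] ω)}, P ω := fun _ h => h 0
  have hD : ∀ ω ∈ {ω | ∀ n, P (f^[n] ω)}, D ω = pos (max (D (f ω)) (σ (f ω)) - τ (f ω)) :=
    fun ω h => (congrFun (hP ω h).1 _).trans (Psi_of_succ_eq _ (by simp only; omega))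
  have hlast : ∀ ω ∈ {ω | ∀ n, P (f^[n] ω)}, D ω = Zfam f σ τ 1 ω := fun ω h =>
    le_antisymm (le_Zfam_one_of_lindley hS hD (fun ω h => (hP ω h).2.1)
      (fun ω h => (hP ω h).2.2.1) (fun ω h => (hP ω h).2.2.2.1) (fun ω h => (hP ω h).2.2.2.2) ω h)
      (Zfam_one_le_of_lindley hS hD ω h)
  refine ⟨hgood.mono hlast, hgood.mono (le_Zfam_of_Psi hS (fun ω h => (hP ω h).1)
    (fun ω h => (hP ω h).2.1) (fun ω h => (hP ω h).2.2.1) fun ω h i hi => ?_)⟩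
  rw [show i = ⟨p - 1, by omega⟩ from Fin.ext (by simp only; omega)]
  exact (hlast ω h).le

end Stationary

end Development

theorem stmt5 {Ω : Type*} [MeasurableSpace Ω] (μ : MeasureTheory.Measure Ω)
    [MeasureTheory.IsProbabilityMeasure μ]
    (θ : Ω ≃ᵐ Ω) (hergo : Ergodic (⇑θ) μ)
    (σ τ : Ω → ℝ) (hσint : MeasureTheory.Integrable σ μ) (hτint : MeasureTheory.Integrable τ μ)
    (hτ0 : ∀ᵐ ω ∂μ, 0 < τ ω)
    (p : ℕ) (hp : 1 ≤ p) :
    (∃ Y : Ω → Fin p → ℝ, Measurable Y ∧ (∀ᵐ ω ∂μ, OSorted (Y ω)) ∧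
      ∀ᵐ ω ∂μ, Y (θ ω) = Psi p (σ ω) (τ ω) (Y ω)) ∧
    (∀ Y : Ω → Fin p → ℝ, Measurable Y → (∀ᵐ ω ∂μ, OSorted (Y ω)) →
      (∀ᵐ ω ∂μ, Y (θ ω) = Psi p (σ ω) (τ ω) (Y ω)) →
      (∀ᵐ ω ∂μ, Y ω ⟨p - 1, by omega⟩ = Zfam (⇑θ.symm) σ τ 1 ω) ∧
      (∀ᵐ ω ∂μ, ∀ i : Fin p, Y ω i ≤ Zfam (⇑θ.symm) σ τ (p - (i : ℕ)) ω)) := by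
  obtain ⟨σ', hσm, hσσ'⟩ := hσint.aemeasurable
  obtain ⟨τ', hτm, hττ'⟩ := hτint.aemeasurable
  have hτ0' : ∀ᵐ ω ∂μ, 0 < τ' ω := by
    filter_upwards [hτ0, hττ'] with ω h e
    rwa [← e]
  have hfix : ∀ Y : Ω → Fin p → ℝ, (∀ᵐ ω ∂μ, Y (θ ω) = Psi p (σ ω) (τ ω) (Y ω)) ↔
      ∀ᵐ ω ∂μ, Y (θ ω) = Psi p (σ' ω) (τ' ω) (Y ω) := fun Y => by
    refine eventually_congr ?_
    filter_upwards [hσσ', hττ'] with ω e₁ e₂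
    rw [e₁, e₂]
  have hZ := Zfam_ae_congr hergo.symm.toMeasurePreserving hσσ' hττ'
  have hσ' := hσint.congr hσσ'
  have hτ' := hτint.congr hττ'
  refine ⟨?_, fun Y hYm _ hY => ?_⟩
  · obtain ⟨Y, hYm, hsorted, hY⟩ := exists_stationary_Psi hergo hσm hτm hσ' hτ' hτ0' (p := p)
    exact ⟨Y, hYm, hsorted, (hfix Y).2 hY⟩
  · obtain ⟨hlast, hle⟩ :=
      stationary_Psi_last_eq_and_le_Zfam hergo hσm hτm hσ' hτ' hτ0' hp hYm ((hfix Y).1 hY)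
    refine ⟨?_, ?_⟩
    · filter_upwards [hlast, hZ] with ω h e
      rw [h, e]
    · filter_upwards [hle, hZ] with ω h e
      simpa only [e] using h
end

section
/- Fix reals σ ≥ 0 and τ ≥ 0, and integers S ≥ 2, 1 ≤ p ≤ S−1. The map Φ^p is nondecreasing for the coordinatewise order: if u, v ∈ Ō_S satisfy u(i) ≤ v(i) for all i ∈ {1,…,S}, then Φ^p(u)(i) ≤ Φ^p(v)(i) for all i ∈ {1,…,S}. -/
open MeasureTheory ProbabilityTheory Filter

@[gcongr]
theorem pos_le_pos {x y : ℝ} (h : x ≤ y) : pos x ≤ pos y :=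
  max_le_max_right 0 h

theorem ite_pos_le_ite_pos {ι : Type*} {u v : ι → ℝ} (huv : ∀ i, u i ≤ v i) (i : ι) {j : ι}
    (hv : 0 ≤ v j) : (if 0 < u i then u j else 0) ≤ (if 0 < v i then v j else 0) := by
  by_cases hui : 0 < u i
  · rw [if_pos hui, if_pos (hui.trans_le (huv i))]
    exact huv j
  · rw [if_neg hui]
    split_ifs
    exacts [hv, le_rfl]

theorem stmt8 (σ τ : ℝ)
    (S p : ℕ) (hS : 2 ≤ S) (hpS : p ≤ S - 1)
    (u v : Fin S → ℝ) (hv : OSorted v)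
    (huv : ∀ i, u i ≤ v i) :
    ∀ i, Phi S p (by omega) σ τ u i ≤ Phi S p (by omega) σ τ v i := by
  intro i
  have hshift := ite_pos_le_ite_pos huv ⟨0, by omega⟩ (hv.1 ⟨p, by omega⟩)
  simp only [Phi]
  -- Hide the shift `u(p+1)·1_{u(1)>0}` so that `split_ifs` only splits on the coordinate cases.
  generalize (if 0 < u _ then u _ else 0) = a, (if 0 < v _ then v _ else 0) = b at hshift ⊢
  split_ifs <;> gcongr <;> apply huv
end

section
/- Let (Ω, F, P, θ) be a stationary ergodic quadruple carrying σ, τ as in the context. Then for every ℓ ∈ ℕ*, the random variable sup_{k ≥ ℓ}(σ∘θ^{-k} − Σ_{i=1}^{k} τ∘θ^{-i}) is finite almost surely; in particular Z_ℓ = [sup_{k ≥ ℓ}(σ∘θ^{-k} − Σ_{i=1}^{k} τ∘θ^{-i})]⁺ is a finite nonnegative random variable almost surely. -/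
open MeasureTheory ProbabilityTheory Filter

/-!
With `T = θ⁻¹` and `g = σ - σ ∘ θ - τ`, the sum `σ ∘ T^k - Σ_{i=1}^k τ ∘ T^i` telescopes to
`σ + Σ_{i<k} g ∘ T^{i+1}`, and `∫ g = -∫ τ < 0`. So it suffices that Birkhoff sums of an
integrable function with negative mean under an ergodic map are a.s. bounded above. That event
is invariant, hence trivial. If it were null, the sets `{max_{n ≤ N} S_n g > 0}` would increase
to a conull set, and Hopf's maximal inequality `∫_{max_{n ≤ N} S_n g > 0} g ≥ 0` would force
`∫ g ≥ 0`.
-/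

open MeasureTheory Filter Function Set

section BirkhoffMax

variable {α : Type*} (f : α → α) (g : α → ℝ)

/-- `birkhoffMax f g N x = max (0, S₁ x, …, S_N x)` where `Sₙ = birkhoffSum f g n`. -/
def birkhoffMax : ℕ → α → ℝ
  | 0 => 0
  | N + 1 => fun x => max 0 (g x + birkhoffMax N (f x))

theorem birkhoffMax_nonneg (N : ℕ) (x : α) : 0 ≤ birkhoffMax f g N x := by
  cases N with
  | zero => exact le_rfl
  | succ N => exact le_max_left _ _

theorem birkhoffMax_le_succ (N : ℕ) (x : α) :
    birkhoffMax f g N x ≤ birkhoffMax f g (N + 1) x := by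
  induction N generalizing x with
  | zero => exact le_max_left _ _
  | succ N ih => exact max_le_max le_rfl (by gcongr; exact ih (f x))

theorem monotone_birkhoffMax (x : α) : Monotone fun N => birkhoffMax f g N x :=
  monotone_nat_of_le_succ fun N => birkhoffMax_le_succ f g N x

theorem birkhoffSum_le_birkhoffMax {n N : ℕ} (hn : n ≤ N) (x : α) :
    birkhoffSum f g n x ≤ birkhoffMax f g N x := by
  induction n generalizing N x with
  | zero => simpa only [birkhoffSum_zero] using birkhoffMax_nonneg f g N x
  | succ n ih =>
    cases N with
    | zero => omega
    | succ N =>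
      rw [birkhoffSum_succ']
      exact le_max_of_le_right (by gcongr; exact ih (by omega) (f x))

theorem birkhoffMax_le_add_of_pos {N : ℕ} {x : α} (hx : 0 < birkhoffMax f g N x) :
    birkhoffMax f g N x ≤ g x + birkhoffMax f g N (f x) := by
  cases N with
  | zero => exact absurd hx (lt_irrefl 0)
  | succ N =>
    have hmax : birkhoffMax f g (N + 1) x = g x + birkhoffMax f g N (f x) :=
      max_eq_right (not_le.1 fun h => hx.not_ge (max_eq_left h).le).le
    rw [hmax]
    gcongr
    exact birkhoffMax_le_succ f g N (f x)

variable [MeasurableSpace α] {f g} {μ : Measure α}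

theorem Measurable.birkhoffMax (hf : Measurable f) (hg : Measurable g) (N : ℕ) :
    Measurable (birkhoffMax f g N) := by
  induction N with
  | zero => exact measurable_const
  | succ N ih => exact measurable_const.max (hg.add (ih.comp hf))

theorem MeasureTheory.Integrable.birkhoffMax (hf : MeasurePreserving f μ μ)
    (hg : Integrable g μ) (N : ℕ) : Integrable (birkhoffMax f g N) μ := by
  induction N with
  | zero => exact integrable_zero _ _ _
  | succ N ih =>
    exact (integrable_zero _ _ _).sup (hg.add (hf.integrable_comp_of_integrable ih))

/-- Hopf's maximal ergodic inequality, by Garsia's argument: where `M = birkhoffMax f g N` is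
positive, `M ≤ g + M ∘ f`; elsewhere `M` vanishes, while `M ∘ f ≥ 0` has the same integral. -/
theorem MeasureTheory.MeasurePreserving.setIntegral_birkhoffMax_pos_nonneg
    (hf : MeasurePreserving f μ μ) (hgm : Measurable g) (hg : Integrable g μ) (N : ℕ) :
    0 ≤ ∫ x in {x | 0 < birkhoffMax f g N x}, g x ∂μ := by
  set M := birkhoffMax f g N
  set E := {x | 0 < M x}
  have hMm : Measurable M := hf.measurable.birkhoffMax hgm N
  have hM : Integrable M μ := hg.birkhoffMax hf N
  have hMf : Integrable (fun x => M (f x)) μ := hf.integrable_comp_of_integrable hM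
  have hE : MeasurableSet E := measurableSet_lt measurable_const hMm
  have hM_off : ∫ x in E, M x ∂μ = ∫ x, M x ∂μ :=
    setIntegral_eq_integral_of_forall_compl_eq_zero fun x hx =>
      le_antisymm (not_lt.1 hx) (birkhoffMax_nonneg f g N x)
  have hMf_le : ∫ x in E, M (f x) ∂μ ≤ ∫ x, M (f x) ∂μ :=
    setIntegral_le_integral hMf (Eventually.of_forall fun x => birkhoffMax_nonneg f g N (f x))
  have hMf_eq : ∫ x, M (f x) ∂μ = ∫ x, M x ∂μ := by
    rw [← integral_map hf.aemeasurable (by rw [hf.map_eq]; exact hMm.aestronglyMeasurable),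
      hf.map_eq]
  have hpointwise : ∫ x in E, (M x - M (f x)) ∂μ ≤ ∫ x in E, g x ∂μ :=
    setIntegral_mono_on (hM.sub hMf).integrableOn hg.integrableOn hE fun x hx => by
      linarith [birkhoffMax_le_add_of_pos f g hx]
  rw [integral_sub hM.integrableOn hMf.integrableOn] at hpointwise
  linarith

end BirkhoffMax

section BoundedBirkhoffSums

variable {α : Type*} {f : α → α} {g : α → ℝ}

theorem bddAbove_birkhoffSum_comp_iff (x : α) :
    BddAbove (range fun n => birkhoffSum f g n (f x)) ↔
      BddAbove (range fun n => birkhoffSum f g n x) := by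
  simp only [bddAbove_def, forall_mem_range]
  constructor
  · rintro ⟨c, hc⟩
    refine ⟨max 0 (g x + c), fun n => ?_⟩
    cases n with
    | zero => exact le_max_of_le_left (birkhoffSum_zero f g x).le
    | succ n => exact le_max_of_le_right (by rw [birkhoffSum_succ']; linarith [hc n])
  · rintro ⟨c, hc⟩
    exact ⟨c - g x, fun n => by linarith [hc (n + 1), birkhoffSum_succ' f g n x]⟩

variable [MeasurableSpace α] {μ : Measure α}

theorem MeasureTheory.MeasurePreserving.integral_nonneg_of_ae_not_bddAbove_birkhoffSum
    (hf : MeasurePreserving f μ μ) (hgm : Measurable g) (hg : Integrable g μ)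
    (hunbdd : ∀ᵐ x ∂μ, ¬BddAbove (range fun n => birkhoffSum f g n x)) :
    0 ≤ ∫ x, g x ∂μ := by
  set E : ℕ → Set α := fun N => {x | 0 < birkhoffMax f g N x}
  have hE : ∀ N, MeasurableSet (E N) := fun N =>
    measurableSet_lt measurable_const (hf.measurable.birkhoffMax hgm N)
  have hE_mono : Monotone E := fun _ _ hNM _ hx =>
    lt_of_lt_of_le hx (monotone_birkhoffMax f g _ hNM)
  have hE_conull : ⋃ N, E N =ᵐ[μ] (univ : Set α) := by
    refine ae_eq_univ.2 (measure_mono_null (fun x hx => ?_) (ae_iff.1 hunbdd))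
    simp only [mem_ofPred_eq, not_not]
    refine ⟨0, forall_mem_range.2 fun n => ?_⟩
    have hxn : x ∉ E n := fun h => hx (mem_iUnion.2 ⟨n, h⟩)
    exact (birkhoffSum_le_birkhoffMax f g le_rfl x).trans (not_lt.1 hxn)
  have hlim := tendsto_setIntegral_of_monotone hE hE_mono hg.integrableOn
  rw [setIntegral_congr_set hE_conull, setIntegral_univ] at hlim
  exact ge_of_tendsto hlim (Eventually.of_forall fun N =>
    hf.setIntegral_birkhoffMax_pos_nonneg hgm hg N)

theorem Ergodic.ae_bddAbove_birkhoffSum_of_integral_neg (hf : Ergodic f μ)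
    (hg : Integrable g μ) (hneg : ∫ x, g x ∂μ < 0) :
    ∀ᵐ x ∂μ, BddAbove (range fun n => birkhoffSum f g n x) := by
  wlog hgm : Measurable g generalizing g
  · have hg' := hg.1.ae_eq_mk
    have hbdd := this (hg.congr hg') (by rwa [← integral_congr_ae hg'])
      hg.1.stronglyMeasurable_mk.measurable
    filter_upwards [hbdd, ae_all_iff.2 fun n =>
      hf.toMeasurePreserving.quasiMeasurePreserving.birkhoffSum_ae_eq_of_ae_eq hg' n]
      with x hx hsum
    simpa only [hsum] using hx
  have hA : MeasurableSet {x | BddAbove (range fun n => birkhoffSum f g n x)} :=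
    measurableSet_bddAbove_range fun n =>
      Finset.measurable_sum _ fun i _ => hgm.comp (hf.measurable.iterate i)
  have hA_inv : f ⁻¹' {x | BddAbove (range fun n => birkhoffSum f g n x)} =
      {x | BddAbove (range fun n => birkhoffSum f g n x)} :=
    ext fun x => bddAbove_birkhoffSum_comp_iff x
  refine (hf.toPreErgodic.ae_mem_or_ae_notMem hA hA_inv).resolve_right fun hunbdd => ?_
  exact hneg.not_ge
    (hf.toMeasurePreserving.integral_nonneg_of_ae_not_bddAbove_birkhoffSum hgm hg hunbdd)

end BoundedBirkhoffSums

theorem integral_pos_of_ae_pos_s16 {α : Type*} [MeasurableSpace α] {μ : Measure α} [NeZero μ]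
    {f : α → ℝ} (hf : Integrable f μ) (hpos : ∀ᵐ x ∂μ, 0 < f x) : 0 < ∫ x, f x ∂μ := by
  have hnonneg : 0 ≤ᵐ[μ] f := hpos.mono fun _ hx => hx.le
  refine (integral_nonneg_of_ae hnonneg).lt_of_ne fun hzero => ?_
  obtain ⟨x, hx, hx0⟩ :=
    (hpos.and ((integral_eq_zero_iff_of_nonneg_ae hnonneg hf).1 hzero.symm)).exists
  exact hx.ne' hx0

theorem Zterm_eq_add_birkhoffSum {Ω : Type*} {T S : Ω → Ω} (hST : LeftInverse S T)
    (σ τ : Ω → ℝ) (k : ℕ) (ω : Ω) :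
    Zterm T σ τ k ω = σ ω + birkhoffSum T (fun x => σ x - σ (S x) - τ x) k (T ω) := by
  induction k with
  | zero => simp [Zterm]
  | succ k ih =>
    have hS : S (T^[k + 1] ω) = T^[k] ω := by rw [iterate_succ_apply', hST]
    have hT : T^[k] (T ω) = T^[k + 1] ω := (iterate_succ_apply T k ω).symm
    rw [birkhoffSum_succ, hT, hS, ← add_assoc, ← ih]
    simp only [Zterm, Finset.sum_Icc_succ_top (Nat.le_add_left 1 k)]
    ring

theorem stmt16_general {Ω : Type*} [MeasurableSpace Ω] (μ : MeasureTheory.Measure Ω)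
    [MeasureTheory.IsProbabilityMeasure μ]
    (θ : Ω ≃ᵐ Ω) (hergo : Ergodic (⇑θ) μ)
    (σ τ : Ω → ℝ) (hσint : MeasureTheory.Integrable σ μ) (hτint : MeasureTheory.Integrable τ μ)
    (hτ0 : ∀ᵐ ω ∂μ, 0 < τ ω) :
    ∀ ℓ : ℕ, 1 ≤ ℓ →
      ∀ᵐ ω ∂μ,
        BddAbove (Set.range fun k : {k : ℕ // ℓ ≤ k} => Zterm (⇑θ.symm) σ τ (k : ℕ) ω) ∧
        0 ≤ Zfam (⇑θ.symm) σ τ ℓ ω := by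
  intro ℓ _
  have hσθ : Integrable (fun x => σ (θ x)) μ :=
    hergo.toMeasurePreserving.integrable_comp_of_integrable hσint
  have hσσθ : Integrable (fun x => σ x - σ (θ x)) μ := hσint.sub hσθ
  have hg_neg : ∫ x, (σ x - σ (θ x) - τ x) ∂μ < 0 := by
    rw [integral_sub hσσθ hτint, integral_sub hσint hσθ,
      hergo.toMeasurePreserving.integral_comp' σ]
    linarith [integral_pos_of_ae_pos_s16 hτint hτ0]
  have hbdd := hergo.symm.ae_bddAbove_birkhoffSum_of_integral_neg
    (g := fun x => σ x - σ (θ x) - τ x) (hσσθ.sub hτint) hg_neg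
  filter_upwards [hergo.symm.toMeasurePreserving.quasiMeasurePreserving.ae hbdd]
    with ω ⟨c, hc⟩
  refine ⟨⟨σ ω + c, forall_mem_range.2 fun k => ?_⟩, le_max_right _ _⟩
  rw [Zterm_eq_add_birkhoffSum θ.apply_symm_apply]
  linarith [hc (mem_range_self k.1)]

theorem stmt16 {Ω : Type*} [MeasurableSpace Ω] (μ : MeasureTheory.Measure Ω)
    [MeasureTheory.IsProbabilityMeasure μ]
    (θ : Ω ≃ᵐ Ω) (hergo : Ergodic (⇑θ) μ)
    (σ τ : Ω → ℝ) (hσint : MeasureTheory.Integrable σ μ) (hτint : MeasureTheory.Integrable τ μ)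
    (hσ0 : ∀ᵐ ω ∂μ, 0 ≤ σ ω) (hτ0 : ∀ᵐ ω ∂μ, 0 < τ ω) :
    ∀ ℓ : ℕ, 1 ≤ ℓ →
      ∀ᵐ ω ∂μ,
        BddAbove (Set.range fun k : {k : ℕ // ℓ ≤ k} => Zterm (⇑θ.symm) σ τ (k : ℕ) ω) ∧
        0 ≤ Zfam (⇑θ.symm) σ τ ℓ ω :=
  stmt16_general μ θ hergo σ τ hσint hτint hτ0
end
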